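/- (Katriel's formula for CCR operators, algebraic version.) Let V be a vector space and suppose for each ξ : X → ℝ (X finite, with reference measure σ) we have linear operators a⁺(ξ), a⁻(ξ) ∈ End(V), linear in ξ, satisfying [a⁺(φ),a⁺(ξ)] = [a⁻(φ),a⁻(ξ)] = 0 and [a⁻(φ),a⁺(ξ)] = Σ_x φ(x)ξ(x)σ({x})·Id. Define a⁺(x), a⁻(x) by a^±(ξ) = Σ_x ξ(x) a^±(x) σ({x}) and ρ(ξ) = Σ_x ξ(x) a⁺(x)a⁻(x) σ({x}). Then for all ξ₁,…,ξ_n, the product ρ(ξ₁)⋯ρ(ξ_n) equals Σ_{k=1}^{n} Σ_{x₁,…,x_k ∈ X} (S(n,k)(ξ₁⊙⋯⊙ξ_n))(x₁,…,x_k) · a⁺(x₁)⋯a⁺(x_k)a⁻(x_k)⋯a⁻(x₁) · σ({x₁})⋯σ({x_k}). -/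

import Mathlib

open Finset

section Defs

variable {X : Type*} [Fintype X] [DecidableEq X]

/-- The falling factorial measure `(ω)_n` on `X^n`, given by the density
`(ω)_n(y₁,…,y_n) = ω(y₁)(ω(y₂)−δ_{y₁}(y₂))⋯(ω(y_n)−δ_{y₁}(y_n)−⋯−δ_{y_{n−1}}(y_n))`. -/
noncomputable def ff (ω : X → ℝ) : (n : ℕ) → (Fin n → X) → ℝ
  | 0 => fun _ => 1
  | n + 1 => fun y =>
      ff ω n (fun i => y i.castSucc) *
        (ω (y (Fin.last n)) - ∑ i : Fin n, if y i.castSucc = y (Fin.last n) then (1 : ℝ) else 0)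

/-- Dirac measure at `x`. -/
noncomputable def diracMeas (x : X) : X → ℝ := fun a => if a = x then 1 else 0

/-- The measure `δ_{x₁}+⋯+δ_{x_k}` of a multiset `[x₁,…,x_k]`. -/
noncomputable def msMeas {k : ℕ} (x : Fin k → X) : X → ℝ :=
  fun a => ((Finset.univ.filter (fun i => x i = a)).card : ℝ)

/-- Integration `⟨μ, f⟩` of a function against a measure on `X^n`. -/
noncomputable def pairing (n : ℕ) (μ f : (Fin n → X) → ℝ) : ℝ :=
  ∑ y : Fin n → X, μ y * f y

/-- Symmetrization of a function/measure on `X^n`. -/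
noncomputable def symmFun (n : ℕ) (μ : (Fin n → X) → ℝ) : (Fin n → X) → ℝ :=
  fun y => (∑ π : Equiv.Perm (Fin n), μ (y ∘ π)) / n.factorial

/-- Tensor product of measures/functions on `X^k` and `X^m`. -/
noncomputable def tensFun {k m : ℕ} (μ : (Fin k → X) → ℝ) (ν : (Fin m → X) → ℝ) :
    (Fin (k + m) → X) → ℝ :=
  fun y => μ (fun i => y (Fin.castAdd m i)) * ν (fun j => y (Fin.natAdd k j))

/-- Re-indexing along an equality of dimensions. -/
def castFun {m n : ℕ} (h : m = n) (μ : (Fin m → X) → ℝ) : (Fin n → X) → ℝ :=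
  fun y => μ (fun i => y (Fin.cast h i))

/-- The product measure `ω^{⊗n}` (and likewise the tensor power `ξ^{⊗n}` of a function). -/
noncomputable def prodMeas (ω : X → ℝ) (n : ℕ) : (Fin n → X) → ℝ :=
  fun y => ∏ i, ω (y i)

/-- A function on `X^n` is symmetric. -/
def IsSymmFun {n : ℕ} (f : (Fin n → X) → ℝ) : Prop :=
  ∀ (π : Equiv.Perm (Fin n)) (y : Fin n → X), f (y ∘ π) = f y

end Defs

/-- The set of surjections `Fin n → Fin k`; these correspond to set partitions of
`{1,…,n}` into `k` nonempty blocks together with an ordering of the blocks. -/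
noncomputable def surjs (n k : ℕ) : Finset (Fin n → Fin k) :=
  Finset.univ.filter (fun g => Function.Surjective g)

/-- Cardinality of the fiber `g⁻¹(i)` (the size of block `i`). -/
def fiberCard {n k : ℕ} (g : Fin n → Fin k) (i : Fin k) : ℕ :=
  (Finset.univ.filter (fun j => g j = i)).card

section Ops

variable {X : Type*} [Fintype X] [DecidableEq X]

/-- Stirling operator of the second kind `S(n,k) = Σ_{λ ∈ UP(n,k)} D_λ`:
summing the substitute-and-symmetrize operators over unordered partitions of `{1,…,n}`
into `k` nonempty blocks is the same as summing `f(y ∘ g)` over the surjections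
`g : Fin n → Fin k` and dividing by `k!`. -/
noncomputable def Sop (n k : ℕ) (f : (Fin n → X) → ℝ) : (Fin k → X) → ℝ :=
  fun y => (∑ g ∈ surjs n k, f (y ∘ g)) / k.factorial

/-- Unsigned Stirling operator of the first kind
`c(n,k) = Σ_{λ={λ₁,…,λ_k} ∈ UP(n,k)} (|λ₁|−1)!⋯(|λ_k|−1)! · D_λ`. -/
noncomputable def cop (n k : ℕ) (f : (Fin n → X) → ℝ) : (Fin k → X) → ℝ :=
  fun y => (∑ g ∈ surjs n k, (∏ i : Fin k, ((fiberCard g i - 1).factorial : ℝ)) * f (y ∘ g)) /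
    k.factorial

/-- Stirling operator of the first kind `s(n,k) = (−1)^{n−k} c(n,k)`. -/
noncomputable def sop (n k : ℕ) (f : (Fin n → X) → ℝ) : (Fin k → X) → ℝ :=
  fun y => (-1 : ℝ) ^ (n - k) * cop n k f y

/-- Lah operator `L(n,k) = Σ_{λ={λ₁,…,λ_k} ∈ UP(n,k)} |λ₁|!⋯|λ_k|! · D_λ`. -/
noncomputable def Lop (n k : ℕ) (f : (Fin n → X) → ℝ) : (Fin k → X) → ℝ :=
  fun y => (∑ g ∈ surjs n k, (∏ i : Fin k, ((fiberCard g i).factorial : ℝ)) * f (y ∘ g)) /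
    k.factorial

end Ops


/-!
Write `W(x) = a⁺(x₁)⋯a⁺(x_k)a⁻(x_k)⋯a⁻(x₁)`; since the `a⁺` and the `a⁻` commute among themselves,
`W` is symmetric in `x`. Moving `a⁺(y)a⁻(y)` through the annihilators with the CCR gives
`W(x)·a⁺(y)a⁻(y) = W(x, y) + σ(y)⁻¹·#{i | xᵢ = y}·W(x)`, so right multiplication by `ρ(φ)` either
appends a new variable with weight `φσ` or multiplies the coefficient by `Σᵢ φ(xᵢ)`.
On the other side, a surjection `{1,…,n+1} → {1,…,k}` either restricts to a surjection on
`{1,…,n}`, or sends `n+1` to a singleton block `i` and restricts to a surjection onto the other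
`k - 1` values. Because `W` is symmetric, the `k` possible positions of the singleton block
contribute equally, which is exactly the ratio `k!/(k-1)!` between the normalisations of `S(n+1,k)`
and `S(n,k-1)`. Induction on `n` follows.
-/

section Surjections

variable {n m k : ℕ}

theorem mem_surjs {g : Fin n → Fin k} : g ∈ surjs n k ↔ Function.Surjective g := by
  simp [surjs]

theorem surjs_eq_empty_of_lt (h : n < k) : surjs n k = ∅ := by
  refine eq_empty_of_forall_notMem fun g hg => ?_
  exact absurd (by simpa using Fintype.card_le_of_surjective g (mem_surjs.mp hg)) h.not_ge

theorem sum_surjs_comp_perm {M : Type*} [AddCommMonoid M] (G : (Fin n → Fin k) → M)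
    (π : Equiv.Perm (Fin n)) : ∑ g ∈ surjs n k, G (g ∘ π) = ∑ g ∈ surjs n k, G g :=
  sum_nbij' (· ∘ π) (· ∘ π.symm)
    (fun g hg => mem_surjs.mpr ((mem_surjs.mp hg).comp π.surjective))
    (fun g hg => mem_surjs.mpr ((mem_surjs.mp hg).comp π.symm.surjective))
    (fun g _ => by ext; simp) (fun g _ => by ext; simp) (fun _ _ => rfl)

theorem surjective_snoc_iff {g : Fin n → Fin (m + 1)} {i : Fin (m + 1)} :
    Function.Surjective (Fin.snoc g i : Fin (n + 1) → Fin (m + 1)) ↔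
      ∀ c, c ≠ i → ∃ j, g j = c := by
  constructor
  · intro hg c hc
    obtain ⟨j, hj⟩ := hg c
    induction j using Fin.lastCases with
    | last => exact absurd (by simpa using hj.symm) hc
    | cast j => exact ⟨j, by simpa using hj⟩
  · intro hg c
    by_cases hc : c = i
    · exact ⟨Fin.last n, by simp [hc]⟩
    · obtain ⟨j, hj⟩ := hg c hc
      exact ⟨j.castSucc, by simp [hj]⟩

theorem filter_surjective_snoc (i : Fin (m + 1)) :
    univ.filter
        (fun g : Fin n → Fin (m + 1) => Function.Surjective (Fin.snoc g i : Fin (n + 1) → _))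
      = surjs n (m + 1) ∪ (surjs n m).image (i.succAbove ∘ ·) := by
  ext g
  simp only [mem_filter, mem_univ, true_and, mem_union, mem_image, mem_surjs,
    surjective_snoc_iff]
  constructor
  · intro hg
    by_cases hi : ∃ j, g j = i
    · left
      intro c
      by_cases hc : c = i
      · exact hc ▸ hi
      · exact hg c hc
    · right
      push Not at hi
      choose h hh using fun j => Fin.exists_succAbove_eq (hi j)
      refine ⟨h, fun c => ?_, funext hh⟩
      obtain ⟨j, hj⟩ := hg (i.succAbove c) (Fin.succAbove_ne i c)
      exact ⟨j, Fin.succAbove_right_injective (by rw [hh, hj])⟩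
  · rintro (hg | ⟨h, hh, rfl⟩) c hc
    · exact hg c
    · obtain ⟨c', rfl⟩ := Fin.exists_succAbove_eq hc
      obtain ⟨j, rfl⟩ := hh c'
      exact ⟨j, rfl⟩

theorem sum_surjs_succ {M : Type*} [AddCommMonoid M] (G : (Fin (n + 1) → Fin (m + 1)) → M) :
    ∑ g ∈ surjs (n + 1) (m + 1), G g
      = ∑ i, ∑ g ∈ surjs n (m + 1), G (Fin.snoc g i)
        + ∑ i, ∑ h ∈ surjs n m, G (Fin.snoc (i.succAbove ∘ h) i) := by
  have hsnoc (p : Fin (m + 1) × (Fin n → Fin (m + 1))) :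
      Fin.snocEquiv (fun _ => Fin (m + 1)) p = Fin.snoc p.2 p.1 := rfl
  rw [← sum_add_distrib, surjs, sum_filter,
    ← (Fin.snocEquiv fun _ => Fin (m + 1)).sum_comp, Fintype.sum_prod_type]
  refine sum_congr rfl fun i _ => ?_
  simp only [hsnoc]
  rw [← sum_filter, filter_surjective_snoc, sum_union, sum_image]
  · exact fun _ _ _ _ h => funext fun j => Fin.succAbove_right_injective (congrFun h j)
  · refine disjoint_left.mpr fun g hg hg' => ?_
    obtain ⟨h, -, rfl⟩ := mem_image.mp hg'
    obtain ⟨j, hj⟩ := mem_surjs.mp hg i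
    exact Fin.succAbove_ne i (h j) hj

end Surjections

section StirlingOperator

variable {X : Type*} {n m : ℕ}

theorem Sop_symmFun (k : ℕ) (f : (Fin n → X) → ℝ) : Sop n k (symmFun n f) = Sop n k f := by
  ext y
  have hπ (π : Equiv.Perm (Fin n)) :
      ∑ g ∈ surjs n k, f (y ∘ (g ∘ π)) = ∑ g ∈ surjs n k, f (y ∘ g) :=
    sum_surjs_comp_perm (fun g => f (y ∘ g)) π
  simp only [Sop, symmFun, ← sum_div, Function.comp_assoc]
  rw [sum_comm, sum_congr rfl fun π _ => hπ π, sum_const, card_univ, Fintype.card_perm,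
    Fintype.card_fin, nsmul_eq_mul, mul_div_cancel_left₀ _ (by positivity)]

theorem Sop_eq_zero_of_lt {k : ℕ} (h : n < k) (f : (Fin n → X) → ℝ) : Sop n k f = 0 := by
  ext y
  simp [Sop, surjs_eq_empty_of_lt h]

theorem Sop_zero_of_pos (hn : 0 < n) (f : (Fin n → X) → ℝ) : Sop n 0 f = 0 := by
  ext y
  have : surjs n 0 = ∅ := eq_empty_of_forall_notMem fun g _ => (g ⟨0, hn⟩).elim0
  simp [Sop, this]

theorem Sop_zero_zero (f : (Fin 0 → X) → ℝ) (y : Fin 0 → X) : Sop 0 0 f y = f y := by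
  have : surjs 0 0 = univ := filter_true_of_mem fun g _ c => c.elim0
  simp [Sop, this, Subsingleton.elim _ y]

theorem Sop_succ_succ_prod (ξ : Fin (n + 1) → X → ℝ) (x : Fin (m + 1) → X) :
    Sop (n + 1) (m + 1) (fun v => ∏ j, ξ j (v j)) x
      = Sop n (m + 1) (fun v => ∏ j, ξ j.castSucc (v j)) x * ∑ i, ξ (Fin.last n) (x i)
        + (∑ i, Sop n m (fun v => ∏ j, ξ j.castSucc (v j)) (x ∘ i.succAbove)
            * ξ (Fin.last n) (x i)) / (m + 1) := by
  simp only [Sop, sum_surjs_succ, Function.comp_apply, Fin.prod_univ_castSucc, Fin.snoc_castSucc,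
    Fin.snoc_last, ← sum_mul, ← mul_sum, div_mul_eq_mul_div, ← sum_div, Nat.factorial_succ]
  push_cast
  field_simp

end StirlingOperator

theorem List.prod_map_eq_of_perm {X M : Type*} [Monoid M] {C : X → M}
    (hC : ∀ x y, C x * C y = C y * C x) {l₁ l₂ : List X} (h : l₁.Perm l₂) :
    (l₁.map C).prod = (l₂.map C).prod :=
  (h.map C).prod_eq' (List.pairwise_map.mpr (List.pairwise_of_forall fun x y => hC x y))

theorem List.sum_map_eq_sum_count_mul {X : Type*} [Fintype X] [DecidableEq X] (l : List X)
    (φ : X → ℝ) : (l.map φ).sum = ∑ y, l.count y * φ y := by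
  rw [Finset.sum_list_map_count, sum_subset (subset_univ _)]
  · simp [nsmul_eq_mul]
  · intro y _ hy
    simp [List.count_eq_zero.mpr (by simpa using hy)]

section NormalOrdering

variable {X : Type*} [DecidableEq X] {R : Type*} [Ring R] [Algebra ℝ R]
  {σ : X → ℝ} {A B : X → R}

def normalMonomial (A B : X → R) (l : List X) : R :=
  (l.map A).prod * (l.reverse.map B).prod

omit [DecidableEq X] [Algebra ℝ R] in
theorem normalMonomial_eq_of_perm (hAA : ∀ x y, A x * A y = A y * A x)
    (hBB : ∀ x y, B x * B y = B y * B x) {l₁ l₂ : List X} (h : l₁.Perm l₂) :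
    normalMonomial A B l₁ = normalMonomial A B l₂ := by
  rw [normalMonomial, normalMonomial, List.prod_map_eq_of_perm hAA h,
    List.prod_map_eq_of_perm hBB ((l₁.reverse_perm.trans h).trans l₂.reverse_perm.symm)]

theorem prod_map_mul_mul_eq (hBB : ∀ x y, B x * B y = B y * B x)
    (hBA : ∀ x y, B x * A y - A y * B x = if x = y then (σ x)⁻¹ • (1 : R) else 0)
    (l : List X) (y : X) :
    (l.map B).prod * A y * B y
      = A y * B y * (l.map B).prod + ((l.count y : ℝ) * (σ y)⁻¹) • (l.map B).prod := by
  induction l with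
  | nil => simp
  | cons b l ih =>
    have hba : B b * A y = A y * B b + if b = y then (σ b)⁻¹ • (1 : R) else 0 := by
      rw [← hBA]; abel
    simp only [List.map_cons, List.prod_cons, List.count_cons, beq_iff_eq, mul_assoc] at ih ⊢
    rw [← mul_assoc (A y), ih, mul_add, ← mul_assoc, ← mul_assoc, hba, mul_smul_comm]
    split_ifs with h
    · subst h
      simp only [add_mul, smul_mul_assoc, one_mul, mul_assoc, hBB b, Nat.cast_add, Nat.cast_one,
        add_smul]
      abel
    · simp only [add_zero, mul_assoc, hBB b]

theorem normalMonomial_mul_mul (hBB : ∀ x y, B x * B y = B y * B x)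
    (hBA : ∀ x y, B x * A y - A y * B x = if x = y then (σ x)⁻¹ • (1 : R) else 0)
    (l : List X) (y : X) :
    normalMonomial A B l * (A y * B y)
      = normalMonomial A B (l ++ [y]) + ((l.count y : ℝ) * (σ y)⁻¹) • normalMonomial A B l := by
  have h := prod_map_mul_mul_eq hBB hBA l.reverse y
  rw [List.count_reverse] at h
  simp only [normalMonomial, List.map_append, List.reverse_append, List.prod_append,
    List.map_cons, List.map_nil, List.reverse_cons, List.reverse_nil, List.nil_append,
    List.prod_cons, List.prod_nil, mul_one, mul_assoc, ← mul_smul_comm]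
  rw [← mul_add, ← mul_assoc (List.map B l.reverse).prod, h, mul_assoc (A y)]

variable [Fintype X]

def density (σ : X → ℝ) (A B : X → R) (φ : X → ℝ) : R :=
  ∑ x, (φ x * σ x) • (A x * B x)

theorem normalMonomial_mul_density (hσ : ∀ x, σ x ≠ 0) (hBB : ∀ x y, B x * B y = B y * B x)
    (hBA : ∀ x y, B x * A y - A y * B x = if x = y then (σ x)⁻¹ • (1 : R) else 0)
    (l : List X) (φ : X → ℝ) :
    normalMonomial A B l * density σ A B φ
      = ∑ y, (φ y * σ y) • normalMonomial A B (l ++ [y])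
        + (l.map φ).sum • normalMonomial A B l := by
  simp only [density, mul_sum, mul_smul_comm, normalMonomial_mul_mul hBB hBA, smul_add,
    sum_add_distrib, smul_smul, ← sum_smul, List.sum_map_eq_sum_count_mul]
  congr 2
  refine sum_congr rfl fun y _ => ?_
  field_simp [hσ y]

end NormalOrdering

theorem List.ofFn_snoc {X : Type*} {k : ℕ} (x : Fin k → X) (y : X) :
    List.ofFn (Fin.snoc x y : Fin (k + 1) → X) = List.ofFn x ++ [y] := by
  rw [List.ofFn_succ']
  simp

section NormalIntegral

variable {X : Type*} [Fintype X] {R : Type*} [Ring R] [Algebra ℝ R]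
  {σ : X → ℝ} {A B : X → R}

/-- `∫ f(x) a⁺(x₁)⋯a⁺(x_k)a⁻(x_k)⋯a⁻(x₁) σ^{⊗k}(dx)` over `X^k`. -/
def normalIntegral (σ : X → ℝ) (A B : X → R) (k : ℕ) : ((Fin k → X) → ℝ) →ₗ[ℝ] R where
  toFun f := ∑ x, (f x * ∏ i, σ (x i)) • normalMonomial A B (List.ofFn x)
  map_add' f g := by simp only [Pi.add_apply, add_mul, add_smul, sum_add_distrib]
  map_smul' c f := by
    simp only [Pi.smul_apply, smul_eq_mul, mul_assoc, mul_smul, RingHom.id_apply, smul_sum]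

theorem normalIntegral_apply (k : ℕ) (f : (Fin k → X) → ℝ) :
    normalIntegral σ A B k f = ∑ x, (f x * ∏ i, σ (x i)) • normalMonomial A B (List.ofFn x) :=
  rfl

theorem normalIntegral_comp_perm (hAA : ∀ x y, A x * A y = A y * A x)
    (hBB : ∀ x y, B x * B y = B y * B x) {k : ℕ} (π : Equiv.Perm (Fin k))
    (f : (Fin k → X) → ℝ) :
    normalIntegral σ A B k (fun x => f (x ∘ π)) = normalIntegral σ A B k f := by
  simp only [normalIntegral_apply]
  rw [← (π.arrowCongr (Equiv.refl X)).sum_comp]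
  refine sum_congr rfl fun x _ => ?_
  have hx : (π.arrowCongr (Equiv.refl X)) x = x ∘ π.symm := rfl
  rw [hx, normalMonomial_eq_of_perm hAA hBB (Equiv.Perm.ofFn_comp_perm π.symm x),
    Function.comp_assoc, π.symm_comp_self, Function.comp_id,
    ← π.symm.prod_comp fun i => σ (x i)]
  rfl

theorem normalIntegral_succAbove (hAA : ∀ x y, A x * A y = A y * A x)
    (hBB : ∀ x y, B x * B y = B y * B x) {k : ℕ} (i : Fin (k + 1))
    (F : X → (Fin k → X) → ℝ) :
    normalIntegral σ A B (k + 1) (fun x => F (x i) (x ∘ i.succAbove))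
      = normalIntegral σ A B (k + 1) (fun x => F (x (Fin.last k)) (Fin.init x)) := by
  have h (j : Fin (k + 1)) : normalIntegral σ A B (k + 1) (fun x => F (x j) (x ∘ j.succAbove))
      = normalIntegral σ A B (k + 1) (fun x => F (x 0) (Fin.tail x)) := by
    rw [← normalIntegral_comp_perm hAA hBB j.cycleRange.symm (fun x => F (x 0) (Fin.tail x))]
    simp [Fin.tail_def, Function.comp_def]
  rw [h i, ← h (Fin.last k), Fin.succAbove_last]
  rfl

theorem normalIntegral_Sop_succ_succ (hAA : ∀ x y, A x * A y = A y * A x)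
    (hBB : ∀ x y, B x * B y = B y * B x) {n k : ℕ} (ξ : Fin (n + 1) → X → ℝ) :
    normalIntegral σ A B (k + 1) (Sop (n + 1) (k + 1) fun v => ∏ j, ξ j (v j))
      = normalIntegral σ A B (k + 1) (fun x =>
          Sop n k (fun v => ∏ j, ξ j.castSucc (v j)) (Fin.init x) * ξ (Fin.last n) (x (Fin.last k)))
        + normalIntegral σ A B (k + 1) (fun x =>
          Sop n (k + 1) (fun v => ∏ j, ξ j.castSucc (v j)) x * ∑ i, ξ (Fin.last n) (x i)) := by
  set S := Sop n k fun v => ∏ j, ξ j.castSucc (v j)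
  have hsplit : (Sop (n + 1) (k + 1) fun v => ∏ j, ξ j (v j))
      = (fun x => Sop n (k + 1) (fun v => ∏ j, ξ j.castSucc (v j)) x * ∑ i, ξ (Fin.last n) (x i))
        + ((k + 1 : ℝ)⁻¹ • ∑ i, fun x => S (x ∘ i.succAbove) * ξ (Fin.last n) (x i)) := by
    ext x
    simp [Sop_succ_succ_prod, S, div_eq_inv_mul]
  have hinsert (i : Fin (k + 1)) :
      normalIntegral σ A B (k + 1) (fun x => S (x ∘ i.succAbove) * ξ (Fin.last n) (x i))
        = normalIntegral σ A B (k + 1)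
            (fun x => S (Fin.init x) * ξ (Fin.last n) (x (Fin.last k))) :=
    normalIntegral_succAbove hAA hBB i fun y z => S z * ξ (Fin.last n) y
  rw [hsplit, map_add, map_smul, map_sum, sum_congr rfl fun i _ => hinsert i, sum_const, card_univ,
    Fintype.card_fin, ← Nat.cast_smul_eq_nsmul ℝ, smul_smul, add_comm]
  push_cast
  rw [inv_mul_cancel₀ (by positivity), one_smul]

variable [DecidableEq X]

theorem normalIntegral_mul_density (hσ : ∀ x, σ x ≠ 0) (hBB : ∀ x y, B x * B y = B y * B x)
    (hBA : ∀ x y, B x * A y - A y * B x = if x = y then (σ x)⁻¹ • (1 : R) else 0)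
    {k : ℕ} (f : (Fin k → X) → ℝ) (φ : X → ℝ) :
    normalIntegral σ A B k f * density σ A B φ
      = normalIntegral σ A B (k + 1) (fun x => f (Fin.init x) * φ (x (Fin.last k)))
        + normalIntegral σ A B k (fun x => f x * ∑ i, φ (x i)) := by
  simp only [normalIntegral_apply, sum_mul, smul_mul_assoc,
    normalMonomial_mul_density hσ hBB hBA, smul_add, sum_add_distrib, smul_sum, smul_smul]
  congr 1
  · rw [← (Fin.snocEquiv fun _ => X).sum_comp, Fintype.sum_prod_type, sum_comm]
    refine sum_congr rfl fun y _ => sum_congr rfl fun x _ => ?_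
    have hxy : Fin.snocEquiv (fun _ => X) (y, x) = Fin.snoc x y := rfl
    simp only [hxy, Fin.init_snoc, Fin.snoc_last, Fin.prod_univ_castSucc, Fin.snoc_castSucc,
      List.ofFn_snoc]
    ring_nf
  · refine sum_congr rfl fun x _ => ?_
    simp only [List.map_ofFn, List.sum_ofFn, Function.comp_apply]
    ring_nf

theorem prod_density_eq_sum_normalIntegral (hσ : ∀ x, σ x ≠ 0)
    (hAA : ∀ x y, A x * A y = A y * A x) (hBB : ∀ x y, B x * B y = B y * B x)
    (hBA : ∀ x y, B x * A y - A y * B x = if x = y then (σ x)⁻¹ • (1 : R) else 0)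
    (n : ℕ) (ξ : Fin n → X → ℝ) :
    (List.ofFn fun j => density σ A B (ξ j)).prod
      = ∑ k ∈ range (n + 1), normalIntegral σ A B k (Sop n k fun v => ∏ j, ξ j (v j)) := by
  induction n with
  | zero => simp [normalIntegral_apply, Sop_zero_zero, normalMonomial]
  | succ n ih =>
    set S := fun k => Sop n k fun v => ∏ j, ξ j.castSucc (v j)
    set φ := ξ (Fin.last n)
    have hshift : ∑ k ∈ range (n + 1), normalIntegral σ A B k (fun x => S k x * ∑ i, φ (x i))
        = ∑ k ∈ range (n + 1),
            normalIntegral σ A B (k + 1) (fun x => S (k + 1) x * ∑ i, φ (x i)) := by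
      have hlast : S (n + 1) = 0 := Sop_eq_zero_of_lt n.lt_succ_self _
      rw [sum_range_succ', sum_range_succ, hlast]
      simp [normalIntegral_apply]
    calc (List.ofFn fun j => density σ A B (ξ j)).prod
        = (∑ k ∈ range (n + 1), normalIntegral σ A B k (S k)) * density σ A B φ := by
          rw [List.ofFn_succ', List.prod_concat, ih]
      _ = ∑ k ∈ range (n + 1),
            (normalIntegral σ A B (k + 1) (fun x => S k (Fin.init x) * φ (x (Fin.last k)))
              + normalIntegral σ A B k (fun x => S k x * ∑ i, φ (x i))) := by
          rw [sum_mul]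
          exact sum_congr rfl fun k _ => normalIntegral_mul_density hσ hBB hBA _ _
      _ = ∑ k ∈ range (n + 1),
            normalIntegral σ A B (k + 1) (Sop (n + 1) (k + 1) fun v => ∏ j, ξ j (v j)) := by
          rw [sum_add_distrib, hshift, ← sum_add_distrib]
          exact sum_congr rfl fun k _ => (normalIntegral_Sop_succ_succ hAA hBB ξ).symm
      _ = _ := by
          rw [sum_range_succ' _ (n + 1), Sop_zero_of_pos n.succ_pos, map_zero, add_zero]

end NormalIntegral

/-- Katriel's formula for CCR operators, algebraic version:
given operators `a⁺(x), a⁻(x)` on a vector space `V` satisfying the pointwise CCR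
`[a⁺(x),a⁺(y)] = [a⁻(x),a⁻(y)] = 0`, `[a⁻(x),a⁺(y)] = (δ_{xy}/σ({x}))·Id`, and the
particle densities `ρ(ξ) = Σ_x ξ(x)σ({x})·a⁺(x)a⁻(x)`, the product `ρ(ξ₁)⋯ρ(ξ_n)`
equals `Σ_{k=1}^{n} Σ_{x₁,…,x_k} (S(n,k)(ξ₁⊙⋯⊙ξ_n))(x₁,…,x_k) ·
a⁺(x₁)⋯a⁺(x_k)a⁻(x_k)⋯a⁻(x₁) · σ({x₁})⋯σ({x_k})`. -/
theorem katriel_formula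
    {X : Type*} [Fintype X] [DecidableEq X] {V : Type*} [AddCommGroup V] [Module ℝ V]
    (σ : X → ℝ) (hσ : ∀ x, σ x ≠ 0)
    (A B : X → Module.End ℝ V)
    (hAA : ∀ x y, A x * A y = A y * A x)
    (hBB : ∀ x y, B x * B y = B y * B x)
    (hBA : ∀ x y, B x * A y - A y * B x
      = if x = y then (σ x)⁻¹ • (1 : Module.End ℝ V) else 0)
    {n : ℕ} (hn : 1 ≤ n) (ξ : Fin n → X → ℝ) :
    (List.ofFn (fun j => ∑ x, (ξ j x * σ x) • (A x * B x))).prod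
      = ∑ k ∈ Finset.Icc 1 n, ∑ x : Fin k → X,
          (Sop n k (symmFun n (fun v => ∏ j, ξ j (v j))) x * ∏ i, σ (x i)) •
            ((List.ofFn (fun i => A (x i))).prod *
              (List.ofFn (fun i => B (x i))).reverse.prod) := by
  have hmonomial {k : ℕ} (x : Fin k → X) :
      (List.ofFn fun i => A (x i)).prod * (List.ofFn fun i => B (x i)).reverse.prod
        = normalMonomial A B (List.ofFn x) := by
    simp only [normalMonomial, List.map_ofFn, List.map_reverse]
    rfl
  calc _ = ∑ k ∈ range (n + 1), normalIntegral σ A B k (Sop n k fun v => ∏ j, ξ j (v j)) :=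
        prod_density_eq_sum_normalIntegral hσ hAA hBB hBA n ξ
    _ = ∑ k ∈ Icc 1 n, normalIntegral σ A B k (Sop n k fun v => ∏ j, ξ j (v j)) := by
        rw [Nat.range_succ_eq_Icc_zero, ← insert_Icc_add_one_left_eq_Icc n.zero_le, zero_add,
          sum_insert (by simp), Sop_zero_of_pos hn, map_zero, zero_add]
    _ = _ := by simp only [normalIntegral_apply, Sop_symmFun, hmonomial]
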